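/- arXiv:1608.06741 — 5 statements merged into one kernel-verified Lean document; each statement's English description precedes it below -/
import Mathlib

section
/- If Q is an m-point Gauss quadrature rule (weights w^i > 0, points x^i) with respect to a probability measure μ on ℝ, i.e. ∑ w^i p(x^i) = ∫ p dμ for all polynomials p of degree at most 2m−1, then for any α > 0 we have ∑_{i=1}^m w^i exp(α (x^i)²) ≤ ∫ exp(α x²) dμ(x). -/
/-!
Write `f = P * Q + R` with `P = ∏ᵢ (X - xᵢ)²` and `deg R < 2m`. The quadrature is exact on `R`,
and `R` agrees with `f` at the nodes, so it underestimates `∫ f` as soon as `Q ≥ 0`. This holds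
when `f⁽²ᵐ⁾ ≥ 0`, by Rolle: for `c = Q(t)` the polynomial `P * (Q - c)` has `2m + 1` real roots
counted with multiplicity, so its `2m`-th derivative `f⁽²ᵐ⁾ - (2m)! c` has a real root.
All even derivatives of the Taylor polynomials of `exp (α t²)` are nonnegative, and the claim
follows by letting their degree tend to infinity.
-/

open MeasureTheory Real Polynomial Finset Filter Topology

open scoped Nat

namespace Polynomial

theorem iterate_derivative_natDegree_self {R : Type*} [Semiring R] (p : R[X]) :
    derivative^[p.natDegree] p = C (p.natDegree ! * p.leadingCoeff) := by
  have hdeg : (derivative^[p.natDegree] p).natDegree ≤ 0 := by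
    simpa using natDegree_iterate_derivative p p.natDegree
  rw [eq_C_of_natDegree_le_zero hdeg, coeff_iterate_derivative, zero_add,
    Nat.descFactorial_self, nsmul_eq_mul, leadingCoeff]

theorem card_roots_le_iterate_derivative (p : ℝ[X]) (n : ℕ) :
    Multiset.card p.roots ≤ Multiset.card (derivative^[n] p).roots + n := by
  induction n with
  | zero => simp
  | succ n ih =>
    rw [Function.iterate_succ_apply']
    linarith [card_roots_le_derivative (derivative^[n] p)]

theorem eval_divByMonic_nonneg_of_iterate_derivative_nonneg {f P : ℝ[X]} (hP : P.Monic)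
    (hroots : Multiset.card P.roots = P.natDegree)
    (hf : ∀ x, 0 ≤ (derivative^[P.natDegree] f).eval x) (t : ℝ) :
    0 ≤ (f /ₘ P).eval t := by
  set N := P.natDegree
  set c := (f /ₘ P).eval t
  set g := P * (f /ₘ P - C c)
  have hg : derivative^[N] g = derivative^[N] f - C (N ! * c) := by
    have hR : derivative^[N] (f %ₘ P) = 0 :=
      iterate_derivative_eq_zero_of_degree_lt <|
        (degree_modByMonic_lt f hP).trans_eq (degree_eq_natDegree hP.ne_zero)
    have : g = f - f %ₘ P - C c * P := by
      linear_combination modByMonic_add_div f P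
    rw [this, iterate_derivative_sub, iterate_derivative_sub, hR, iterate_derivative_C_mul,
      iterate_derivative_natDegree_self, hP.leadingCoeff, sub_zero, mul_one, ← C_mul, mul_comm]
  obtain ⟨ξ, hξ⟩ : ∃ ξ, (derivative^[N] g).IsRoot ξ := by
    by_cases hg0 : g = 0
    · exact ⟨0, by simp [hg0]⟩
    have ht : t ∈ (f /ₘ P - C c).roots :=
      (mem_roots (right_ne_zero_of_mul hg0)).2 (by simp [c])
    have hcard : N + 1 ≤ Multiset.card g.roots := by
      rw [roots_mul hg0, Multiset.card_add, hroots]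
      exact Nat.add_le_add_left (Multiset.card_pos_iff_exists_mem.2 ⟨t, ht⟩) N
    have hpos : 0 < Multiset.card (derivative^[N] g).roots := by
      linarith [card_roots_le_iterate_derivative g N]
    obtain ⟨ξ, hξ⟩ := Multiset.card_pos_iff_exists_mem.1 hpos
    exact ⟨ξ, isRoot_of_mem_roots hξ⟩
  rw [hg, IsRoot, eval_sub, eval_C, sub_eq_zero] at hξ
  have := hf ξ
  rw [hξ] at this
  exact nonneg_of_mul_nonneg_right this (by positivity)

end Polynomial

namespace Lagrange

theorem roots_nodal {ι R : Type*} [CommRing R] [IsDomain R] (s : Finset ι) (v : ι → R) :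
    (nodal s v).roots = s.val.map v := by
  rw [nodal, roots_prod _ _ nodal_ne_zero]
  simp

end Lagrange

theorem sum_mul_eval_le_integral_of_iterate_derivative_nonneg {ι : Type*} [Fintype ι]
    {μ : Measure ℝ} {w x : ι → ℝ}
    (hexact : ∀ p : ℝ[X], p.natDegree ≤ 2 * Fintype.card ι - 1 →
      ∑ i, w i * p.eval (x i) = ∫ t, p.eval t ∂μ)
    (hint : ∀ p : ℝ[X], Integrable (fun t => p.eval t) μ) {f : ℝ[X]}
    (hf : ∀ t, 0 ≤ (derivative^[2 * Fintype.card ι] f).eval t) :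
    ∑ i, w i * f.eval (x i) ≤ ∫ t, f.eval t ∂μ := by
  set P := Lagrange.nodal univ x ^ 2
  have hPmonic : P.Monic := Lagrange.nodal_monic.pow 2
  have hPdeg : P.natDegree = 2 * Fintype.card ι := by
    simp [P, natDegree_pow, mul_comm]
  have hProots : Multiset.card P.roots = P.natDegree := by
    simp [P, roots_pow, Lagrange.roots_nodal, hPdeg]
  have hRdeg : (f %ₘ P).natDegree ≤ 2 * Fintype.card ι - 1 := by
    by_cases hR : f %ₘ P = 0
    · simp [hR]
    have := (natDegree_lt_iff_degree_lt hR).2 <|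
      (degree_modByMonic_lt f hPmonic).trans_eq (degree_eq_natDegree hPmonic.ne_zero)
    omega
  have hsplit : ∀ t, f.eval t = (f %ₘ P).eval t + P.eval t * (f /ₘ P).eval t := fun t => by
    rw [← eval_mul, ← eval_add, modByMonic_add_div]
  have hnode : ∀ i, f.eval (x i) = (f %ₘ P).eval (x i) := fun i => by
    simp [hsplit, P, Lagrange.eval_nodal_at_node (mem_univ i)]
  have hle : ∀ t, (f %ₘ P).eval t ≤ f.eval t := fun t => by
    have hQ := eval_divByMonic_nonneg_of_iterate_derivative_nonneg hPmonic hProots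
      (hPdeg ▸ hf) t
    have hP : 0 ≤ P.eval t := by simp only [P, eval_pow]; positivity
    rw [hsplit t]
    linarith [mul_nonneg hP hQ]
  calc ∑ i, w i * f.eval (x i) = ∑ i, w i * (f %ₘ P).eval (x i) := by simp only [← hnode]
    _ = ∫ t, (f %ₘ P).eval t ∂μ := hexact _ hRdeg
    _ ≤ ∫ t, f.eval t ∂μ := integral_mono (hint _) (hint f) hle

theorem abs_pow_le_mul_exp_mul_sq {α : ℝ} (hα : 0 < α) (n : ℕ) (t : ℝ) :
    |t| ^ n ≤ (1 + n ! / α ^ n) * exp (α * t ^ 2) := by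
  have hone : 1 ≤ exp (α * t ^ 2) := one_le_exp (by positivity)
  have hsq : (t ^ 2) ^ n ≤ n ! / α ^ n * exp (α * t ^ 2) := by
    have := pow_div_factorial_le_exp (x := α * t ^ 2) (by positivity) n
    rw [mul_pow, div_le_iff₀ (by positivity)] at this
    rw [div_mul_eq_mul_div, le_div_iff₀ (by positivity)]
    linarith
  have hamgm : |t| ^ n ≤ 1 + (t ^ 2) ^ n := by
    rw [← sq_abs, ← pow_mul, pow_mul']
    nlinarith [sq_nonneg (|t| ^ n - 1)]
  nlinarith

theorem integrable_pow_of_integrable_exp_mul_sq {μ : Measure ℝ} {α : ℝ} (hα : 0 < α)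
    (hint : Integrable (fun t => exp (α * t ^ 2)) μ) (n : ℕ) :
    Integrable (fun t : ℝ => t ^ n) μ :=
  (hint.const_mul _).mono' (by fun_prop) <| .of_forall fun t => by
    simpa only [norm_pow, norm_eq_abs] using abs_pow_le_mul_exp_mul_sq hα n t

theorem Polynomial.integrable_eval_of_integrable_pow {μ : Measure ℝ}
    (h : ∀ n : ℕ, Integrable (fun t : ℝ => t ^ n) μ) (p : ℝ[X]) :
    Integrable (fun t => p.eval t) μ := by
  simp_rw [eval_eq_sum_range]
  exact integrable_finsetSum _ fun n _ => (h n).const_mul _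

noncomputable def expMulSqTaylor (α : ℝ) (K : ℕ) : ℝ[X] :=
  ∑ k ∈ range K, C (α ^ k / k !) * X ^ (2 * k)

theorem eval_expMulSqTaylor (α : ℝ) (K : ℕ) (t : ℝ) :
    (expMulSqTaylor α K).eval t = ∑ k ∈ range K, (α * t ^ 2) ^ k / k ! := by
  simp only [expMulSqTaylor, eval_finsetSum, eval_mul, eval_C, eval_pow, eval_X]
  refine sum_congr rfl fun k _ => ?_
  rw [mul_pow, pow_mul]
  ring

theorem tendsto_eval_expMulSqTaylor (α t : ℝ) :
    Tendsto (fun K => (expMulSqTaylor α K).eval t) atTop (𝓝 (exp (α * t ^ 2))) := by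
  simp_rw [eval_expMulSqTaylor, exp_eq_exp_ℝ]
  exact (NormedSpace.expSeries_div_hasSum_exp (α * t ^ 2)).tendsto_sum_nat

theorem eval_iterate_derivative_expMulSqTaylor_nonneg {α : ℝ} (hα : 0 ≤ α) (K : ℕ) {j : ℕ}
    (hj : Even j) (t : ℝ) : 0 ≤ (derivative^[j] (expMulSqTaylor α K)).eval t := by
  simp only [expMulSqTaylor, iterate_derivative_sum, iterate_derivative_C_mul,
    iterate_derivative_X_pow_eq_C_mul, eval_finsetSum, eval_mul, eval_C, eval_pow, eval_X]
  refine sum_nonneg fun k _ => mul_nonneg (by positivity) (mul_nonneg (by positivity) ?_)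
  exact ((even_two_mul k).tsub hj).pow_nonneg _

theorem gauss_quadrature_exp_sq_le_general
    (μ : Measure ℝ) (m : ℕ)
    (w : Fin m → ℝ) (x : Fin m → ℝ)
    (hexact : ∀ p : Polynomial ℝ, p.natDegree ≤ 2 * m - 1 →
      ∑ i, w i * p.eval (x i) = ∫ t, p.eval t ∂μ)
    (α : ℝ) (hα : 0 < α)
    (hint : Integrable (fun t : ℝ => Real.exp (α * t ^ 2)) μ) :
    ∑ i, w i * Real.exp (α * (x i) ^ 2) ≤ ∫ t, Real.exp (α * t ^ 2) ∂μ := by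
  have hpoly :=
    integrable_eval_of_integrable_pow (integrable_pow_of_integrable_exp_mul_sq hα hint)
  have hpartial (K : ℕ) :
      ∑ i, w i * (expMulSqTaylor α K).eval (x i) ≤ ∫ t, exp (α * t ^ 2) ∂μ := calc
    _ ≤ ∫ t, (expMulSqTaylor α K).eval t ∂μ :=
      sum_mul_eval_le_integral_of_iterate_derivative_nonneg (by simpa using hexact) hpoly
        (eval_iterate_derivative_expMulSqTaylor_nonneg hα.le K (even_two_mul _))
    _ ≤ ∫ t, exp (α * t ^ 2) ∂μ := integral_mono (hpoly _) hint fun t => by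
      simpa only [eval_expMulSqTaylor] using sum_le_exp_of_nonneg (by positivity) K
  exact le_of_tendsto' (tendsto_finsetSum _ fun i _ =>
    (tendsto_eval_expMulSqTaylor α (x i)).const_mul (w i)) hpartial

/-- Gauss quadrature applied to `exp (α x²)` is a lower bound for the integral. -/
theorem gauss_quadrature_exp_sq_le
    (μ : Measure ℝ) [IsProbabilityMeasure μ] (m : ℕ)
    (w : Fin m → ℝ) (x : Fin m → ℝ)
    (hw : ∀ i, 0 < w i)
    (hexact : ∀ p : Polynomial ℝ, p.natDegree ≤ 2 * m - 1 →
      ∑ i, w i * p.eval (x i) = ∫ t, p.eval t ∂μ)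
    (α : ℝ) (hα : 0 < α)
    (hint : Integrable (fun t : ℝ => Real.exp (α * t ^ 2)) μ) :
    ∑ i, w i * Real.exp (α * (x i) ^ 2) ≤ ∫ t, Real.exp (α * t ^ 2) ∂μ :=
  gauss_quadrature_exp_sq_le_general μ m w x hexact α hα hint
end

section
/- Let μ be a discrete probability measure with support points y^1,…,y^{Nm} and let an m-point Gauss quadrature rule with points x^1,…,x^m approximate μ. Suppose there exist points z^1,…,z^m such that |z^i − y^j| ≤ δ for all j with (i−1)N+1 ≤ j ≤ iN. Let R = max of all |z^i| and |y^j|. Then for every φ ∈ C^{2m}(ℝ), the quadrature error satisfies |E(φ)| ≤ δ (2R)^{2m−1} (1/(2m)!) sup_{x∈(−R,R)} |φ^{(2m)}(x)|. -/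
open Finset Polynomial

/-!
Interpolate `φ` by `p` at `2m` nodes containing the Gauss nodes `x i` and the cluster centres
`z i`. Then `deg p < 2m`, so the rule is exact on `p` and agrees with it at its nodes, whence
`E(φ) = ∫ (φ - p) dμ`. The interpolation remainder `φ y - p y = φ⁽²ᵐ⁾(ξ) / (2m)! · ∏ᵤ (y - u)`
contains the factor `|y - z i| ≤ δ`, and its other `2m - 1` factors are at most `2R` because
Gauss nodes lie in the convex hull of the support of `μ`.
-/

theorem Polynomial.iteratedDeriv_eval {𝕜 : Type*} [NontriviallyNormedField 𝕜] (p : 𝕜[X])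
    (k : ℕ) : iteratedDeriv k (fun t => p.eval t) = fun t => (derivative^[k] p).eval t := by
  induction k generalizing p with
  | zero => simp
  | succ k ih =>
    have hderiv : deriv (fun t => p.eval t) = fun t => (derivative p).eval t := by
      ext t; exact p.deriv
    rw [iteratedDeriv_succ', hderiv, ih, Function.iterate_succ_apply]

theorem Polynomial.Monic.iterate_derivative_natDegree {R : Type*} [CommSemiring R] {p : R[X]}
    (hp : p.Monic) : derivative^[p.natDegree] p = C (p.natDegree.factorial : R) := by
  have hdeg : (derivative^[p.natDegree] p).natDegree ≤ 0 :=
    (p.natDegree_iterate_derivative _).trans (by omega)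
  rw [eq_C_of_natDegree_le_zero hdeg, coeff_iterate_derivative, zero_add, hp.coeff_natDegree,
    Nat.descFactorial_self, nsmul_one]

theorem exists_iteratedDeriv_eq_zero_of_strictMono {n : ℕ} {f : ℝ → ℝ}
    (hf : ContDiff ℝ (n + 1 : ℕ) f) {a : Fin (n + 2) → ℝ} (ha : StrictMono a)
    (hfa : ∀ k, f (a k) = 0) :
    ∃ ξ ∈ Set.Ioo (a 0) (a (Fin.last (n + 1))), iteratedDeriv (n + 1) f ξ = 0 := by
  induction n generalizing f with
  | zero =>
    simpa using exists_deriv_eq_zero (ha Fin.zero_lt_one) hf.continuous.continuousOn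
      (by rw [hfa, hfa])
  | succ n ih =>
    have hrolle : ∀ k : Fin (n + 2), ∃ c ∈ Set.Ioo (a k.castSucc) (a k.succ), deriv f c = 0 :=
      fun k => exists_deriv_eq_zero (ha k.castSucc_lt_succ) hf.continuous.continuousOn
        (by rw [hfa, hfa])
    choose b hb hfb using hrolle
    have hb_mono : StrictMono b := fun k l hkl =>
      ((hb k).2.trans_le (ha.monotone (Fin.succ_le_castSucc_iff.2 hkl))).trans (hb l).1
    obtain ⟨ξ, hξ, hξ0⟩ := ih (ContDiff.deriv' (by exact_mod_cast hf)) hb_mono hfb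
    exact ⟨ξ, ⟨(hb 0).1.trans hξ.1, hξ.2.trans (hb _).2⟩, by rwa [iteratedDeriv_succ']⟩

theorem exists_iteratedDeriv_eq_zero_of_card {n : ℕ} {f : ℝ → ℝ}
    (hf : ContDiff ℝ (n + 1 : ℕ) f) {s : Finset ℝ} (hs : s.card = n + 2) {a b : ℝ}
    (hsab : ↑s ⊆ Set.Icc a b) (hfs : ∀ u ∈ s, f u = 0) :
    ∃ ξ ∈ Set.Ioo a b, iteratedDeriv (n + 1) f ξ = 0 := by
  have hmem := s.orderEmbOfFin_mem hs
  obtain ⟨ξ, hξ, hξ0⟩ := exists_iteratedDeriv_eq_zero_of_strictMono hf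
    (s.orderEmbOfFin hs).strictMono fun k => hfs _ (hmem k)
  exact ⟨ξ, ⟨(hsab (hmem 0)).1.trans_lt hξ.1, hξ.2.trans_le (hsab (hmem _)).2⟩, hξ0⟩

theorem Lagrange.exists_sub_interpolate_mul_factorial_eq {n : ℕ} (hn : 0 < n) {T : Finset ℝ}
    (hT : T.card = n) {φ : ℝ → ℝ} (hφ : ContDiff ℝ n φ) {a b Y : ℝ}
    (hTab : ↑T ⊆ Set.Icc a b) (hY : Y ∈ Set.Icc a b) (hYT : Y ∉ T) :
    ∃ ξ ∈ Set.Ioo a b, (φ Y - (interpolate T id φ).eval Y) * n.factorial =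
      iteratedDeriv n φ ξ * (nodal T id).eval Y := by
  obtain ⟨k, rfl⟩ : ∃ k, n = k + 1 := ⟨n - 1, by omega⟩
  set p := interpolate T id φ
  set W := nodal T id
  set c := φ Y - p.eval Y
  set q : ℝ[X] := C c * W + C (W.eval Y) * p
  -- `g` vanishes at `Y` and at the `k + 1` nodes, so Rolle applies to its `k + 2` zeros.
  set g : ℝ → ℝ := fun t => q.eval t - W.eval Y * φ t
  have hp_deg : p.degree < ↑(k + 1) := hT ▸ degree_interpolate_lt φ (Set.injOn_id _)
  have hq : derivative^[k + 1] q = C (c * (k + 1).factorial) := by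
    have hW : derivative^[k + 1] W = C ((k + 1).factorial : ℝ) := by
      rw [← hT, ← natDegree_nodal (v := id)]
      exact nodal_monic.iterate_derivative_natDegree
    simp only [q, iterate_map_add, iterate_derivative_C_mul, hW,
      iterate_derivative_eq_zero_of_degree_lt hp_deg, mul_zero, add_zero, C_mul]
  have hq_smooth : ContDiff ℝ (k + 1 : ℕ) fun t => q.eval t := q.contDiff_aeval _
  have hg_zero : ∀ u ∈ insert Y T, g u = 0 := by
    intro u hu
    rcases mem_insert.1 hu with rfl | huT
    · simp only [g, q, c, eval_add, eval_mul, eval_C]; ring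
    · have hWu : W.eval u = 0 := eval_nodal_at_node (v := id) huT
      have hpu : p.eval u = φ u := eval_interpolate_at_node φ (Set.injOn_id _) huT
      simp only [g, q, eval_add, eval_mul, eval_C, hWu, hpu]; ring
  obtain ⟨ξ, hξ, hgξ⟩ := exists_iteratedDeriv_eq_zero_of_card (s := insert Y T)
    (hq_smooth.sub (contDiff_const.mul hφ)) (by rw [card_insert_of_notMem hYT, hT])
    (by simpa [Set.insert_subset_iff] using ⟨hY, hTab⟩) hg_zero
  refine ⟨ξ, hξ, ?_⟩
  simp only [iteratedDeriv_fun_sub hq_smooth.contDiffAt (contDiff_const.mul hφ).contDiffAt,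
    iteratedDeriv_const_mul_field, Polynomial.iteratedDeriv_eval, hq, eval_C] at hgξ
  linarith

theorem Lagrange.abs_sub_interpolate_le {n : ℕ} (hn : 0 < n) {T : Finset ℝ} (hT : T.card = n)
    {φ : ℝ → ℝ} (hφ : ContDiff ℝ n φ) {a b Y C : ℝ} (hTab : ↑T ⊆ Set.Icc a b)
    (hY : Y ∈ Set.Icc a b) (hC : ∀ t ∈ Set.Ioo a b, |iteratedDeriv n φ t| ≤ C) :
    |φ Y - (interpolate T id φ).eval Y| ≤ C / n.factorial * ∏ u ∈ T, |Y - u| := by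
  by_cases hYT : Y ∈ T
  · have hnode : (interpolate T id φ).eval Y = φ Y :=
      eval_interpolate_at_node φ (Set.injOn_id _) hYT
    rw [hnode, sub_self, abs_zero, prod_eq_zero hYT (by rw [sub_self, abs_zero]), mul_zero]
  obtain ⟨ξ, hξ, herr⟩ := exists_sub_interpolate_mul_factorial_eq hn hT hφ hTab hY hYT
  have hfact : (0 : ℝ) < n.factorial := by positivity
  rw [div_mul_eq_mul_div, le_div_iff₀ hfact, ← abs_of_pos hfact, ← abs_mul, herr, abs_mul,
    eval_nodal, ← abs_prod]
  exact mul_le_mul_of_nonneg_right (hC ξ hξ) (abs_nonneg _)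

theorem prod_abs_sub_le_of_mem_Icc {T : Finset ℝ} {a b Y z δ : ℝ} (hTab : ↑T ⊆ Set.Icc a b)
    (hY : Y ∈ Set.Icc a b) (hz : z ∈ T) (hYz : |Y - z| ≤ δ) :
    ∏ u ∈ T, |Y - u| ≤ δ * (b - a) ^ (T.card - 1) := by
  rw [← mul_prod_erase T _ hz, ← card_erase_of_mem hz, ← prod_const]
  refine mul_le_mul hYz (prod_le_prod (fun _ _ => abs_nonneg _) fun u hu => ?_)
    (prod_nonneg fun _ _ => abs_nonneg _) ((abs_nonneg _).trans hYz)
  have hu := hTab (mem_of_mem_erase hu)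
  exact abs_sub_le_iff.2 ⟨by linarith [hY.2, hu.1], by linarith [hY.1, hu.2]⟩

theorem Set.Infinite.exists_superset_card_eq {α : Type*} {s : Set α} (hs : s.Infinite)
    {S : Finset α} (hSs : ↑S ⊆ s) {n : ℕ} (hSn : S.card ≤ n) :
    ∃ T : Finset α, S ⊆ T ∧ ↑T ⊆ s ∧ T.card = n := by
  classical
  obtain ⟨F, hFs, hFn⟩ := hs.exists_subset_card_eq n
  have hnSF : n ≤ (S ∪ F).card := hFn ▸ Finset.card_le_card Finset.subset_union_right
  obtain ⟨T, hST, hTSF, hTn⟩ :=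
    Finset.exists_subsuperset_card_eq Finset.subset_union_left hSn hnSF
  refine ⟨T, hST, fun u hu => ?_, hTn⟩
  rcases Finset.mem_union.1 (hTSF hu) with hS | hF
  exacts [hSs hS, hFs hF]

section GaussNodes

variable {ι κ : Type*} [Fintype ι] [Fintype κ] {v y : ι → ℝ} {w x z : κ → ℝ}

/- `(X - b) q`, with `q = ∏ (X - xₗ)²` over the nodes `xₗ ≠ b = x k`, is integrated exactly and
vanishes at every node, while `q` has positive quadrature. If every `y i ≤ R < b`, then
`∫ (X - b) q dμ ≤ (R - b) ∫ q dμ < 0`. -/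
theorem gauss_node_le_of_forall_le (hv : ∀ i, 0 ≤ v i) (hw : ∀ k, 0 < w k)
    (hexact : ∀ p : ℝ[X], p.natDegree ≤ 2 * Fintype.card κ - 1 →
      ∑ k, w k * p.eval (x k) = ∑ i, v i * p.eval (y i))
    {R : ℝ} (hy : ∀ i, y i ≤ R) (k : κ) : x k ≤ R := by
  classical
  by_contra! hRk
  set b := x k
  set s := univ.filter fun l => x l ≠ b
  set q : ℝ[X] := Lagrange.nodal s x ^ 2
  have hq_nonneg : ∀ t, 0 ≤ q.eval t := fun t => by rw [eval_pow]; positivity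
  have hs_card : s.card + 1 ≤ Fintype.card κ :=
    card_lt_univ_of_notMem (x := k) (by simp [s, b])
  have hq_deg : q.natDegree ≤ 2 * Fintype.card κ - 1 := by
    rw [natDegree_pow, Lagrange.natDegree_nodal]; omega
  have hbq_deg : ((X - C b) * q).natDegree ≤ 2 * Fintype.card κ - 1 := by
    refine natDegree_mul_le.trans ?_
    rw [natDegree_pow, Lagrange.natDegree_nodal, natDegree_X_sub_C]
    omega
  have hq_pos : 0 < ∑ l, w l * q.eval (x l) := by
    have hqb : 0 < q.eval b := by
      rw [eval_pow]
      exact pow_two_pos_of_ne_zero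
        (Lagrange.eval_nodal_not_at_node fun l hl => (mem_filter.1 hl).2.symm)
    exact (mul_pos (hw k) hqb).trans_le <| single_le_sum (f := fun l => w l * q.eval (x l))
      (fun l _ => mul_nonneg (hw l).le (hq_nonneg _)) (mem_univ k)
  have hbq_zero : ∑ l, w l * ((X - C b) * q).eval (x l) = 0 := by
    refine sum_eq_zero fun l _ => ?_
    by_cases hl : x l = b
    · simp [hl]
    · have : (Lagrange.nodal s x).eval (x l) = 0 :=
        Lagrange.eval_nodal_at_node (mem_filter.2 ⟨mem_univ l, hl⟩)
      simp [q, this]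
  have hμ : ∑ i, v i * ((X - C b) * q).eval (y i) ≤ (R - b) * ∑ i, v i * q.eval (y i) := by
    rw [mul_sum]
    refine sum_le_sum fun i _ => ?_
    have hvq := mul_nonneg (hv i) (hq_nonneg (y i))
    simp only [eval_mul, eval_sub, eval_C, eval_X]
    nlinarith [hy i]
  rw [← hexact _ hq_deg, ← hexact _ hbq_deg, hbq_zero] at hμ
  exact (mul_neg_of_neg_of_pos (sub_neg.2 hRk) hq_pos).not_ge hμ

theorem gauss_node_mem_Icc_of_forall_mem_Icc (hv : ∀ i, 0 ≤ v i) (hw : ∀ k, 0 < w k)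
    (hexact : ∀ p : ℝ[X], p.natDegree ≤ 2 * Fintype.card κ - 1 →
      ∑ k, w k * p.eval (x k) = ∑ i, v i * p.eval (y i))
    {a b : ℝ} (hy : ∀ i, y i ∈ Set.Icc a b) (k : κ) : x k ∈ Set.Icc a b := by
  refine ⟨?_, gauss_node_le_of_forall_le hv hw hexact (fun i => (hy i).2) k⟩
  have hexact_neg : ∀ p : ℝ[X], p.natDegree ≤ 2 * Fintype.card κ - 1 →
      ∑ k, w k * p.eval (-x k) = ∑ i, v i * p.eval (-y i) := fun p hp => by
    simpa using hexact (p.comp (-X))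
      (by rwa [natDegree_comp, natDegree_neg, natDegree_X, mul_one])
  simpa using gauss_node_le_of_forall_le (x := -x) (y := -y) hv hw hexact_neg
    (fun i => neg_le_neg (hy i).1) k

theorem quadrature_error_eq_sum_mul_sub_of_exact {d : ℕ}
    (hexact : ∀ p : ℝ[X], p.natDegree ≤ d → ∑ k, w k * p.eval (x k) = ∑ i, v i * p.eval (y i))
    {φ : ℝ → ℝ} {p : ℝ[X]} (hp : p.natDegree ≤ d) (hpx : ∀ k, p.eval (x k) = φ (x k)) :
    ∑ i, v i * φ (y i) - ∑ k, w k * φ (x k) = ∑ i, v i * (φ (y i) - p.eval (y i)) := by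
  simp only [← hpx, hexact p hp, mul_sub, sum_sub_distrib]

theorem abs_sum_mul_le_of_sum_eq_one {f : ι → ℝ} {B : ℝ} (hv : ∀ i, 0 ≤ v i)
    (hv_sum : ∑ i, v i = 1) (hf : ∀ i, |f i| ≤ B) : |∑ i, v i * f i| ≤ B :=
  calc |∑ i, v i * f i| ≤ ∑ i, v i * B := (abs_sum_le_sum_abs _ _).trans <| sum_le_sum fun i _ => by
        rw [abs_mul, abs_of_nonneg (hv i)]; exact mul_le_mul_of_nonneg_left (hf i) (hv i)
    _ = B := by rw [← sum_mul, hv_sum, one_mul]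

theorem abs_gauss_quadrature_error_le_of_cluster [Nonempty κ] {c : ι → κ} {a b δ C : ℝ}
    (hab : a < b) (hv : ∀ i, 0 ≤ v i) (hv_sum : ∑ i, v i = 1) (hw : ∀ k, 0 < w k)
    (hexact : ∀ p : ℝ[X], p.natDegree ≤ 2 * Fintype.card κ - 1 →
      ∑ k, w k * p.eval (x k) = ∑ i, v i * p.eval (y i))
    (hy : ∀ i, y i ∈ Set.Icc a b) (hz : ∀ k, z k ∈ Set.Icc a b)
    (hcluster : ∀ i, |y i - z (c i)| ≤ δ) {φ : ℝ → ℝ} (hφ : ContDiff ℝ (2 * Fintype.card κ) φ)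
    (hC : ∀ t ∈ Set.Ioo a b, |iteratedDeriv (2 * Fintype.card κ) φ t| ≤ C) :
    |∑ i, v i * φ (y i) - ∑ k, w k * φ (x k)| ≤
      C / (2 * Fintype.card κ).factorial * (δ * (b - a) ^ (2 * Fintype.card κ - 1)) := by
  classical
  have hx := gauss_node_mem_Icc_of_forall_mem_Icc hv hw hexact hy
  obtain ⟨T, hzxT, hTab, hT⟩ := (Set.Icc_infinite hab).exists_superset_card_eq
    (S := univ.image z ∪ univ.image x) (n := 2 * Fintype.card κ)
    (by simpa [Set.range_subset_iff] using ⟨hz, hx⟩)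
    ((card_union_le _ _).trans <|
      (add_le_add card_image_le card_image_le).trans (by simp [two_mul]))
  set p := Lagrange.interpolate T id φ
  have hp_deg : p.natDegree ≤ 2 * Fintype.card κ - 1 :=
    natDegree_le_of_degree_le (hT ▸ Lagrange.degree_interpolate_le φ (Set.injOn_id _))
  have hpx : ∀ k, p.eval (x k) = φ (x k) := fun k => Lagrange.eval_interpolate_at_node φ
    (Set.injOn_id _) (hzxT (mem_union_right _ (mem_image_of_mem x (mem_univ k))))
  have hC0 : 0 ≤ C := (abs_nonneg _).trans (hC ((a + b) / 2) ⟨by linarith, by linarith⟩)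
  rw [quadrature_error_eq_sum_mul_sub_of_exact hexact hp_deg hpx]
  refine abs_sum_mul_le_of_sum_eq_one hv hv_sum fun i => ?_
  have hzT : z (c i) ∈ T := hzxT (mem_union_left _ (mem_image_of_mem z (mem_univ _)))
  calc |φ (y i) - p.eval (y i)| ≤ C / (2 * Fintype.card κ).factorial * ∏ u ∈ T, |y i - u| :=
        Lagrange.abs_sub_interpolate_le (by positivity) hT hφ hTab (hy i) hC
    _ ≤ _ := by
        rw [← hT]
        gcongr
        exact prod_abs_sub_le_of_mem_Icc hTab (hy i) hzT (hcluster i)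

end GaussNodes

theorem gauss_quadrature_clustered_error_general
    (N m : ℕ) (hm : 0 < m)
    (v : Fin m → Fin N → ℝ) (y : Fin m → Fin N → ℝ)
    (w : Fin m → ℝ) (x : Fin m → ℝ) (z : Fin m → ℝ)
    (δ R C : ℝ) (hR : 0 < R)
    (hv : ∀ i j, 0 < v i j) (hvsum : ∑ i, ∑ j, v i j = 1)
    (hw : ∀ i, 0 < w i)
    (hexact : ∀ p : Polynomial ℝ, p.natDegree ≤ 2 * m - 1 →
      ∑ i, w i * p.eval (x i) = ∑ i, ∑ j, v i j * p.eval (y i j))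
    (hcluster : ∀ i j, |z i - y i j| ≤ δ)
    (hzR : ∀ i, |z i| ≤ R) (hyR : ∀ i j, |y i j| ≤ R)
    (φ : ℝ → ℝ) (hφ : ContDiff ℝ (2 * m) φ)
    (hC : ∀ t ∈ Set.Ioo (-R) R, |iteratedDeriv (2 * m) φ t| ≤ C) :
    |(∑ i, ∑ j, v i j * φ (y i j)) - ∑ i, w i * φ (x i)| ≤
      δ * (2 * R) ^ (2 * m - 1) * (1 / (Nat.factorial (2 * m) : ℝ)) * C := by
  have : Nonempty (Fin m) := ⟨⟨0, hm⟩⟩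
  have h := abs_gauss_quadrature_error_le_of_cluster (v := fun ij : Fin m × Fin N => v ij.1 ij.2)
    (y := fun ij => y ij.1 ij.2) (c := Prod.fst) (by linarith : -R < R)
    (fun ij => (hv ij.1 ij.2).le) (by rwa [Fintype.sum_prod_type']) hw
    (fun p hp => by rw [Fintype.sum_prod_type]; exact hexact p (by simpa using hp))
    (fun ij => abs_le.1 (hyR ij.1 ij.2)) (fun k => abs_le.1 (hzR k))
    (fun ij => abs_sub_comm (z ij.1) _ ▸ hcluster ij.1 ij.2) (φ := φ)
    (by simpa using hφ) (by simpa using hC)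
  rw [Fintype.sum_prod_type] at h
  convert h using 1
  simp only [Fintype.card_fin, sub_neg_eq_add]
  ring

/-- Gauss quadrature error estimate for a discrete measure whose `N·m` support
points cluster within `δ` of `m` points `z i`. -/
theorem gauss_quadrature_clustered_error
    (N m : ℕ) (hN : 0 < N) (hm : 0 < m)
    (v : Fin m → Fin N → ℝ) (y : Fin m → Fin N → ℝ)
    (w : Fin m → ℝ) (x : Fin m → ℝ) (z : Fin m → ℝ)
    (δ R C : ℝ) (hδ : 0 ≤ δ) (hR : 0 < R)
    (hv : ∀ i j, 0 < v i j) (hvsum : ∑ i, ∑ j, v i j = 1)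
    (hw : ∀ i, 0 < w i) (hwsum : ∑ i, w i = 1)
    (hexact : ∀ p : Polynomial ℝ, p.natDegree ≤ 2 * m - 1 →
      ∑ i, w i * p.eval (x i) = ∑ i, ∑ j, v i j * p.eval (y i j))
    (hcluster : ∀ i j, |z i - y i j| ≤ δ)
    (hzR : ∀ i, |z i| ≤ R) (hyR : ∀ i j, |y i j| ≤ R)
    (φ : ℝ → ℝ) (hφ : ContDiff ℝ (2 * m) φ)
    (hC : ∀ t ∈ Set.Ioo (-R) R, |iteratedDeriv (2 * m) φ t| ≤ C) :
    |(∑ i, ∑ j, v i j * φ (y i j)) - ∑ i, w i * φ (x i)| ≤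
      δ * (2 * R) ^ (2 * m - 1) * (1 / (Nat.factorial (2 * m) : ℝ)) * C :=
  gauss_quadrature_clustered_error_general N m hm v y w x z δ R C hR hv hvsum hw hexact hcluster hzR
    hyR φ hφ hC
end

section
/- Let μ be a probability measure on ℝ with ∫ e^{λ x²} dμ < ∞ for some λ > 0. For Δt > 0, set R = sqrt((4/λ)|log Δt|) and define μ_Δt(A) = μ(A ∩ (−R,R)) + μ((−∞,−R])·δ_{−R}(A) + μ([R,∞))·δ_R(A). Then there exists c > 0 independent of Δt ∈ (0,1) such that for all continuous φ with |φ(x)| ≤ ‖φ‖_{0,β}(1+|x|^β), we have |∫φ dμ − ∫φ dμ_Δt| ≤ c‖φ‖_{0,β}·Δt². -/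
open MeasureTheory Real Set

/-!
Moving the tail mass of `μ` beyond `±R` to the points `±R` changes `∫ φ` by the integral over
`|x| ≥ R` of `φ x - φ (±R)`, which is at most `2‖φ‖ C e^{λx²/2}` since polynomial growth is
dominated by a Gaussian. On `|x| ≥ R` one has `e^{λx²/2} ≤ e^{-λR²/2} e^{λx²}`, and `R` is chosen
so that `e^{-λR²/2} = Δt²`; the moment assumption bounds what is left.
-/

lemma one_add_abs_rpow_le_mul_exp {a β : ℝ} (ha : 0 < a) (hβ : 0 ≤ β) :
    ∃ C > 0, ∀ x : ℝ, 1 + |x| ^ β ≤ C * exp (a * x ^ 2) := by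
  refine ⟨1 + exp (β ^ 2 / (4 * a)), by positivity, fun x => ?_⟩
  have h_one : 1 ≤ exp (a * x ^ 2) := one_le_exp (by positivity)
  -- `|x| ≤ exp |x|` and AM-GM: `β |x| ≤ β² / (4a) + a x²`
  have h_rpow : |x| ^ β ≤ exp (β ^ 2 / (4 * a)) * exp (a * x ^ 2) := by
    calc |x| ^ β ≤ exp |x| ^ β :=
          rpow_le_rpow (abs_nonneg x) ((le_add_of_nonneg_right zero_le_one).trans
            (add_one_le_exp |x|)) hβ
      _ = exp (β * |x|) := by rw [← exp_mul, mul_comm]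
      _ ≤ exp (β ^ 2 / (4 * a) + a * x ^ 2) := by
          gcongr
          rw [div_add' _ _ _ (by positivity), le_div_iff₀ (by positivity), ← sq_abs x]
          nlinarith [sq_nonneg (β - 2 * a * |x|)]
      _ = exp (β ^ 2 / (4 * a)) * exp (a * x ^ 2) := exp_add _ _
  linarith

lemma exp_neg_half_mul_sq_sqrt_log {lam t : ℝ} (hlam : 0 < lam) (ht : 0 < t) (ht1 : t ≤ 1) :
    exp (-(lam / 2) * √(4 / lam * |log t|) ^ 2) = t ^ 2 := by
  rw [sq_sqrt (by positivity), abs_of_nonpos (log_nonpos ht.le ht1),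
    show -(lam / 2) * (4 / lam * -log t) = (2 : ℕ) * log t by field_simp; ring,
    ← log_pow, exp_log (by positivity)]

/-- `μ_Δt` is `lumpTails μ (-R) R`. -/
noncomputable def lumpTails (μ : Measure ℝ) (a b : ℝ) : Measure ℝ :=
  μ.restrict (Ioo a b) + μ (Iic a) • Measure.dirac a + μ (Ici b) • Measure.dirac b

section Truncation

variable {μ : Measure ℝ} {f : ℝ → ℝ} {a b : ℝ}

lemma integral_eq_Iic_add_Ioo_add_Ici (hab : a < b) (hf : Integrable f μ) :
    ∫ x, f x ∂μ =
      (∫ x in Iic a, f x ∂μ) + (∫ x in Ioo a b, f x ∂μ) + ∫ x in Ici b, f x ∂μ := by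
  rw [← setIntegral_union (Iic_disjoint_Ioc le_rfl |>.mono_right Ioo_subset_Ioc_self)
      measurableSet_Ioo hf.integrableOn hf.integrableOn, Iic_union_Ioo_eq_Iio hab,
    ← setIntegral_union (Iio_disjoint_Ici le_rfl) measurableSet_Ici hf.integrableOn
      hf.integrableOn, Iio_union_Ici, setIntegral_univ]

variable [IsFiniteMeasure μ]

lemma integral_lumpTails (hf : Integrable f μ) :
    ∫ x, f x ∂(lumpTails μ a b) =
      (∫ x in Ioo a b, f x ∂μ) + μ.real (Iic a) * f a + μ.real (Ici b) * f b := by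
  have h_dirac (c : ℝ) (s : Set ℝ) : Integrable f (μ s • Measure.dirac c) :=
    (integrable_dirac enorm_lt_top).smul_measure (measure_ne_top μ s)
  rw [lumpTails, integral_add_measure (hf.restrict.add_measure (h_dirac _ _)) (h_dirac _ _),
    integral_add_measure hf.restrict (h_dirac _ _), integral_smul_measure,
    integral_smul_measure, integral_dirac, integral_dirac, smul_eq_mul, smul_eq_mul,
    measureReal_def, measureReal_def]

lemma integral_sub_integral_lumpTails (hab : a < b) (hf : Integrable f μ) :
    ∫ x, f x ∂μ - ∫ x, f x ∂(lumpTails μ a b) =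
      (∫ x in Iic a, (f x - f a) ∂μ) + ∫ x in Ici b, (f x - f b) ∂μ := by
  rw [integral_eq_Iic_add_Ioo_add_Ici hab hf, integral_lumpTails hf,
    integral_sub hf.integrableOn (integrable_const _), integral_sub hf.integrableOn
      (integrable_const _), setIntegral_const, setIntegral_const, smul_eq_mul, smul_eq_mul]
  ring

end Truncation

lemma abs_setIntegral_sub_le_of_abs_le_mul_exp {μ : Measure ℝ} {f : ℝ → ℝ} {lam M c : ℝ}
    {s : Set ℝ} (hmom : Integrable (fun x => exp (lam * x ^ 2)) μ)
    (hf : ∀ x, |f x| ≤ M * exp (lam / 2 * x ^ 2)) (hs_abs : ∀ x ∈ s, |c| ≤ |x|)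
    (hs : MeasurableSet s) (hlam : 0 ≤ lam) :
    |∫ x in s, (f x - f c) ∂μ| ≤
      2 * M * exp (-(lam / 2) * c ^ 2) * ∫ x, exp (lam * x ^ 2) ∂μ := by
  have hM : 0 ≤ M := nonneg_of_mul_nonneg_left ((abs_nonneg _).trans (hf 0)) (exp_pos _)
  have h_pt : ∀ x ∈ s, ‖f x - f c‖ ≤ 2 * M * exp (-(lam / 2) * c ^ 2) * exp (lam * x ^ 2) := by
    intro x hx
    have hcx : c ^ 2 ≤ x ^ 2 := sq_le_sq.2 (hs_abs x hx)
    have h_fc : |f c| ≤ M * exp (lam / 2 * x ^ 2) := (hf c).trans (by gcongr)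
    have h_gauss : exp (lam / 2 * x ^ 2) ≤ exp (-(lam / 2) * c ^ 2) * exp (lam * x ^ 2) := by
      rw [← exp_add]; gcongr; nlinarith
    calc ‖f x - f c‖ ≤ |f x| + |f c| := abs_sub _ _
      _ ≤ 2 * M * exp (lam / 2 * x ^ 2) := by linarith [hf x]
      _ ≤ 2 * M * exp (-(lam / 2) * c ^ 2) * exp (lam * x ^ 2) := by
          rw [mul_assoc _ (exp _)]; gcongr
  calc |∫ x in s, (f x - f c) ∂μ|
      ≤ ∫ x in s, 2 * M * exp (-(lam / 2) * c ^ 2) * exp (lam * x ^ 2) ∂μ :=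
        norm_integral_le_of_norm_le (hmom.const_mul _).integrableOn
          ((ae_restrict_iff' hs).2 (Filter.Eventually.of_forall h_pt))
    _ = 2 * M * exp (-(lam / 2) * c ^ 2) * ∫ x in s, exp (lam * x ^ 2) ∂μ :=
        integral_const_mul _ _
    _ ≤ 2 * M * exp (-(lam / 2) * c ^ 2) * ∫ x, exp (lam * x ^ 2) ∂μ :=
        mul_le_mul_of_nonneg_left (setIntegral_le_integral hmom
          (Filter.Eventually.of_forall fun x => (exp_pos _).le)) (by positivity)

/-- Support reduction to `[-R, R]` with `R = sqrt((4/λ)|log Δt|)` incurs an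
error of order `Δt²` for test functions of polynomial growth. -/
theorem support_reduction_error
    (lam β : ℝ) (hlam : 0 < lam) (hβ : 0 ≤ β)
    (μ : Measure ℝ) [IsProbabilityMeasure μ]
    (hmom : Integrable (fun x => Real.exp (lam * x ^ 2)) μ) :
    ∃ c > 0, ∀ dt : ℝ, 0 < dt → dt < 1 →
      ∀ φ : ℝ → ℝ, Continuous φ →
      ∀ B : ℝ, 0 ≤ B → (∀ x, |φ x| ≤ B * (1 + |x| ^ β)) →
      |(∫ x, φ x ∂μ) -
        ∫ x, φ x ∂(μ.restrict (Set.Ioo (-(Real.sqrt ((4 / lam) * |Real.log dt|)))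
            (Real.sqrt ((4 / lam) * |Real.log dt|)))
          + μ (Set.Iic (-(Real.sqrt ((4 / lam) * |Real.log dt|))))
              • Measure.dirac (-(Real.sqrt ((4 / lam) * |Real.log dt|)))
          + μ (Set.Ici (Real.sqrt ((4 / lam) * |Real.log dt|)))
              • Measure.dirac (Real.sqrt ((4 / lam) * |Real.log dt|)))| ≤
        c * B * dt ^ 2 := by
  obtain ⟨C, hC, h_weight⟩ := one_add_abs_rpow_le_mul_exp (half_pos hlam) hβ
  set K := ∫ x, exp (lam * x ^ 2) ∂μ
  refine ⟨4 * C * K, mul_pos (mul_pos four_pos hC) (integral_exp_pos hmom),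
    fun dt hdt hdt1 φ hφ B hB hφB => ?_⟩
  set R := √(4 / lam * |log dt|)
  have hR : 0 < R := sqrt_pos.2 (mul_pos (by positivity) (abs_pos.2 (log_neg hdt hdt1).ne))
  have hφ_exp (x : ℝ) : |φ x| ≤ B * C * exp (lam / 2 * x ^ 2) := by
    rw [mul_assoc]; exact (hφB x).trans (by gcongr; exact h_weight x)
  have hφ_int : Integrable φ μ :=
    (hmom.const_mul (B * C)).mono' hφ.aestronglyMeasurable (Filter.Eventually.of_forall
      fun x => (hφ_exp x).trans (by gcongr; linarith))
  have h_left := abs_setIntegral_sub_le_of_abs_le_mul_exp (c := -R) (s := Iic (-R)) hmom hφ_exp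
    (fun x hx => by rw [abs_neg, abs_of_pos hR]; exact le_abs.2 (.inr (le_neg.1 hx)))
    measurableSet_Iic hlam.le
  have h_right := abs_setIntegral_sub_le_of_abs_le_mul_exp (c := R) (s := Ici R) hmom hφ_exp
    (fun x hx => by rw [abs_of_pos hR]; exact le_abs.2 (.inl hx)) measurableSet_Ici hlam.le
  rw [neg_sq, exp_neg_half_mul_sq_sqrt_log hlam hdt hdt1.le] at h_left
  rw [exp_neg_half_mul_sq_sqrt_log hlam hdt hdt1.le] at h_right
  change |_ - ∫ x, φ x ∂(lumpTails μ (-R) R)| ≤ _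
  rw [integral_sub_integral_lumpTails (neg_lt_self hR) hφ_int]
  calc _ ≤ _ := abs_add_le _ _
    _ ≤ _ := add_le_add h_left h_right
    _ = 4 * C * K * B * dt ^ 2 := by ring
end

section
/- Consider the recursion α_{n+1} = α_n(1 + cΔt) + cΔt·α_n² with c > 0, Δt > 0, n·Δt ≤ 1. If α_0 ≤ e^{−2c}, then α_n ≤ α_0 e^{2c·nΔt} ≤ 1 for all n with nΔt ≤ 1. -/
/-- Discrete Gronwall-type bound for the recursion
`α_{n+1} = α_n (1 + cΔt) + cΔt α_n²`. -/
theorem recursion_gronwall (c dt : ℝ) (hc : 0 < c) (hdt : 0 < dt)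
    (α : ℕ → ℝ) (h0 : 0 ≤ α 0) (hinit : α 0 ≤ Real.exp (-(2 * c)))
    (hrec : ∀ n, α (n + 1) = α n * (1 + c * dt) + c * dt * (α n) ^ 2) :
    ∀ n : ℕ, (n : ℝ) * dt ≤ 1 →
      α n ≤ α 0 * Real.exp (2 * c * ((n : ℝ) * dt)) ∧
      α 0 * Real.exp (2 * c * ((n : ℝ) * dt)) ≤ 1 := by
  have hpos : ∀ n, 0 ≤ α n := by
    intro n
    induction n with
    | zero => exact h0
    | succ k ih =>
      rw [hrec k]
      have : 0 ≤ c * dt := le_of_lt (mul_pos hc hdt)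
      positivity
  intro n
  induction n with
  | zero =>
    intro _
    constructor
    · simp
    · simp only [Nat.cast_zero, zero_mul, mul_zero, Real.exp_zero, mul_one]
      calc α 0 ≤ Real.exp (-(2 * c)) := hinit
        _ ≤ 1 := Real.exp_le_one_iff.mpr (by nlinarith)
  | succ k ih =>
    intro hle
    have hkle : (k : ℝ) * dt ≤ 1 := by
      have : (k : ℝ) ≤ (k : ℝ) + 1 := by linarith
      calc (k : ℝ) * dt ≤ ((k : ℝ) + 1) * dt := by nlinarith
        _ = ((k + 1 : ℕ) : ℝ) * dt := by push_cast; ring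
        _ ≤ 1 := hle
    obtain ⟨h1, h2⟩ := ih hkle
    have hαk1 : α k ≤ 1 := le_trans h1 h2
    have hcdt : 0 < c * dt := mul_pos hc hdt
    have hstep : α (k + 1) ≤ α k * (1 + 2 * (c * dt)) := by
      rw [hrec k]
      have hk0 := hpos k
      nlinarith [mul_nonneg hcdt.le (mul_nonneg hk0 (sub_nonneg.mpr hαk1))]
    have hexp : 1 + 2 * (c * dt) ≤ Real.exp (2 * (c * dt)) := by
      have := Real.add_one_le_exp (2 * (c * dt))
      linarith
    have hkexp : α (k + 1) ≤ α 0 * Real.exp (2 * c * ((k : ℝ) * dt)) * Real.exp (2 * (c * dt)) := by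
      calc α (k + 1) ≤ α k * (1 + 2 * (c * dt)) := hstep
        _ ≤ (α 0 * Real.exp (2 * c * ((k : ℝ) * dt))) * Real.exp (2 * (c * dt)) := by
            apply mul_le_mul h1 hexp (by linarith) (by positivity)
    have heq : α 0 * Real.exp (2 * c * ((k : ℝ) * dt)) * Real.exp (2 * (c * dt))
        = α 0 * Real.exp (2 * c * (((k + 1 : ℕ) : ℝ) * dt)) := by
      rw [mul_assoc, ← Real.exp_add]
      push_cast
      ring_nf
    constructor
    · rw [← heq]; exact hkexp
    · calc α 0 * Real.exp (2 * c * (((k + 1 : ℕ) : ℝ) * dt))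
          ≤ Real.exp (-(2 * c)) * Real.exp (2 * c * 1) := by
            apply mul_le_mul hinit _ (by positivity) (by positivity)
            apply Real.exp_le_exp.mpr
            nlinarith
        _ = 1 := by rw [← Real.exp_add]; norm_num
end

section
/- Let λ > 0, Δt ∈ (0, 1/e) and for each n with t_n = nΔt < 1 define m_n as the smallest nonnegative integer m with log Γ(2m+1) ≥ (3/2)|log Δt| + ((2m−1)/2)·log((16/λ)|log Δt|) + (m−2)|log(1−t_n)|. Then m_n ≤ 1 + max{ (3/4)|log Δt|, (e²/2)·sqrt(16|log Δt|/(λ(1−t_n))) }. -/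
/-!
If `m` is minimal, the criterion fails at `k = m - 1`. With `X = 16 |log Δt| / (λ (1 - tₙ))` the
right-hand side at `k` is `(3/2)|log Δt| + ((2k-1)/2) log X + (3/2) log (1 - tₙ)`, whose last term is
`≤ 0`. If `k` exceeded both `(3/4)|log Δt|` and `(e²/2) √X`, then `log X ≤ 2 log (2k) - 4`, and the
elementary bound `log n! ≥ (n - 1) log n - n + 2` at `n = 2k` would make the criterion hold at `k`.
-/

open Real

theorem le_log_factorial_of_two_le {n : ℕ} (hn : 2 ≤ n) :
    ((n : ℝ) - 1) * log n - n + 2 ≤ log n.factorial := by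
  induction n, hn using Nat.le_induction with
  | base => norm_num [Nat.factorial]
  | succ n hn ih =>
    have hn' : (2 : ℝ) ≤ n := by exact_mod_cast hn
    have hlog_succ : log (n + 1) - log n ≤ 1 / n := by
      rw [← log_div (by positivity) (by positivity)]
      calc log ((n + 1) / n) ≤ (n + 1) / n - 1 := log_le_sub_one_of_pos (by positivity)
        _ = 1 / n := by field_simp; ring
    have hgap : ((n : ℝ) - 1) * (log (n + 1) - log n) ≤ 1 :=
      calc ((n : ℝ) - 1) * (log (n + 1) - log n) ≤ ((n : ℝ) - 1) * (1 / n) := by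
            gcongr; linarith
        _ ≤ 1 := by rw [mul_one_div, div_le_one (by positivity)]; linarith
    rw [Nat.factorial_succ, Nat.cast_mul, log_mul (by positivity) (by positivity)]
    push_cast
    linarith

theorem log_le_two_mul_log_of_sqrt_le {x y : ℝ} (hx : 0 < x) (h : √x ≤ y) :
    log x ≤ 2 * log y := by
  have := log_le_log (sqrt_pos.mpr hx) h
  rw [log_sqrt hx.le] at this
  linarith

theorem le_log_factorial_two_mul {k : ℕ} (hk : 1 ≤ k) {L x : ℝ} (hx : 0 < x)
    (hL : 3 / 4 * L ≤ k) (hxk : exp 2 / 2 * √x ≤ k) :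
    3 / 2 * L + (2 * k - 1) / 2 * log x ≤ log (2 * k).factorial := by
  have hk' : (1 : ℝ) ≤ k := by exact_mod_cast hk
  have hlog_x : log x ≤ 2 * (log (2 * k) - 2) := by
    have hsqrt : √x ≤ 2 * k / exp 2 := by
      rw [le_div_iff₀ (exp_pos 2)]; linarith
    have := log_le_two_mul_log_of_sqrt_le hx hsqrt
    rwa [log_div (by positivity) (exp_pos 2).ne', log_exp] at this
  have hfact := le_log_factorial_of_two_le (show 2 ≤ 2 * k by omega)
  push_cast at hfact
  have := mul_le_mul_of_nonneg_left hlog_x (show 0 ≤ (2 * (k : ℝ) - 1) / 2 by linarith)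
  linarith

/-- The paper's `M₁(m, Δt, n)`, with `t = tₙ`. -/
noncomputable def gaussCriterionRHS (lam dt t : ℝ) (m : ℕ) : ℝ :=
  3 / 2 * |log dt| + (2 * (m : ℝ) - 1) / 2 * log (16 / lam * |log dt|)
    + ((m : ℝ) - 2) * |log (1 - t)|

theorem gaussCriterionRHS_eq {lam dt t : ℝ} (hlam : 0 < lam) (hdt : log dt ≠ 0) (ht0 : 0 ≤ t)
    (ht : t < 1) (m : ℕ) :
    gaussCriterionRHS lam dt t m = 3 / 2 * |log dt|
      + (2 * m - 1) / 2 * log (16 * |log dt| / (lam * (1 - t))) + 3 / 2 * log (1 - t) := by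
  have h1t : 0 < 1 - t := by linarith
  rw [gaussCriterionRHS, abs_of_nonpos (log_nonpos h1t.le (by linarith)),
    show 16 * |log dt| / (lam * (1 - t)) = 16 / lam * |log dt| / (1 - t) by field_simp,
    log_div (by positivity) h1t.ne']
  ring

theorem gaussCriterionRHS_le_log_Gamma {lam dt t : ℝ} (hlam : 0 < lam) (hdt : log dt ≠ 0)
    (ht0 : 0 ≤ t) (ht : t < 1) {k : ℕ} (hk : 1 ≤ k) (hL : 3 / 4 * |log dt| ≤ k)
    (hX : exp 2 / 2 * √(16 * |log dt| / (lam * (1 - t))) ≤ k) :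
    gaussCriterionRHS lam dt t k ≤ log (Gamma (2 * k + 1)) := by
  have hX_pos : 0 < 16 * |log dt| / (lam * (1 - t)) := by
    have : 0 < 1 - t := by linarith
    positivity
  have hlog_1t : log (1 - t) ≤ 0 := log_nonpos (by linarith) (by linarith)
  rw [gaussCriterionRHS_eq hlam hdt ht0 ht,
    show (2 * k + 1 : ℝ) = (2 * k : ℕ) + 1 by push_cast; ring, Gamma_nat_eq_factorial]
  linarith [le_log_factorial_two_mul hk hX_pos hL hX]

theorem gauss_point_count_bound_general
    (lam dt : ℝ) (hlam : 0 < lam) (hdt : 0 < dt) (hdt1 : dt < 1 / Real.exp 1)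
    (t : ℝ) (ht0 : 0 ≤ t) (ht : t < 1)
    (m : ℕ)
    (hmin : ∀ k : ℕ, k < m →
      ¬ (Real.log (Real.Gamma (2 * k + 1)) ≥
        (3 / 2) * |Real.log dt|
        + ((2 * (k : ℝ) - 1) / 2) * Real.log ((16 / lam) * |Real.log dt|)
        + ((k : ℝ) - 2) * |Real.log (1 - t)|)) :
    (m : ℝ) ≤ 1 + max ((3 / 4) * |Real.log dt|)
      ((Real.exp 2 / 2) * Real.sqrt (16 * |Real.log dt| / (lam * (1 - t)))) := by
  have hlog_dt : log dt < -1 := by simpa [log_inv] using log_lt_log hdt hdt1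
  by_contra! hm
  have hm_pos : 0 < m := by
    have : 0 ≤ max (3 / 4 * |log dt|) (exp 2 / 2 * √(16 * |log dt| / (lam * (1 - t)))) :=
      le_max_of_le_left (by positivity)
    exact_mod_cast (by linarith : (0 : ℝ) < m)
  obtain ⟨k, rfl⟩ := Nat.exists_eq_add_one.mpr hm_pos
  push_cast at hm
  obtain ⟨hk_L, hk_X⟩ := max_lt_iff.mp (by linarith : _ < (k : ℝ))
  have hk : 1 ≤ k := by
    have : (0 : ℝ) < k := lt_of_le_of_lt (by positivity) hk_L
    exact_mod_cast this
  exact hmin k k.lt_add_one <| gaussCriterionRHS_le_log_Gamma hlam (by linarith : log dt < 0).ne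
    ht0 ht hk hk_L.le hk_X.le

/-- Bound on the number of Gauss points chosen via the criterion
`log Γ(2m+1) ≥ M₁(m, Δt, n)`. -/
theorem gauss_point_count_bound
    (lam dt : ℝ) (hlam : 0 < lam) (hdt : 0 < dt) (hdt1 : dt < 1 / Real.exp 1)
    (t : ℝ) (ht0 : 0 ≤ t) (ht : t < 1)
    (m : ℕ)
    (hsat : Real.log (Real.Gamma (2 * m + 1)) ≥
      (3 / 2) * |Real.log dt|
      + ((2 * (m : ℝ) - 1) / 2) * Real.log ((16 / lam) * |Real.log dt|)
      + ((m : ℝ) - 2) * |Real.log (1 - t)|)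
    (hmin : ∀ k : ℕ, k < m →
      ¬ (Real.log (Real.Gamma (2 * k + 1)) ≥
        (3 / 2) * |Real.log dt|
        + ((2 * (k : ℝ) - 1) / 2) * Real.log ((16 / lam) * |Real.log dt|)
        + ((k : ℝ) - 2) * |Real.log (1 - t)|)) :
    (m : ℝ) ≤ 1 + max ((3 / 4) * |Real.log dt|)
      ((Real.exp 2 / 2) * Real.sqrt (16 * |Real.log dt| / (lam * (1 - t)))) :=
  gauss_point_count_bound_general lam dt hlam hdt hdt1 t ht0 ht m hmin
end
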